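/- arXiv:1103.6075 — 7 statements merged into one kernel-verified Lean document; each statement's English description precedes it below -/
import Mathlib

section
/- Let D ⊆ ℝ² be open and let q, r, q̄, r̄, φ : D → ℂ be C² functions satisfying the mPLR system. Then on D the functions q and r satisfy the second-order system ∂²q/∂t∂t̄ = 4q + 4qr·(∂q/∂t̄) and ∂²r/∂t∂t̄ = 4r − 4qr·(∂r/∂t̄). -/
/-- Partial derivative with respect to the first coordinate `t`. -/
noncomputable def pd1 (f : ℝ × ℝ → ℂ) : ℝ × ℝ → ℂ :=
  fun p => fderiv ℝ f p ((1 : ℝ), (0 : ℝ))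

/-- Partial derivative with respect to the second coordinate `t̄`. -/
noncomputable def pd2 (f : ℝ × ℝ → ℂ) : ℝ × ℝ → ℂ :=
  fun p => fderiv ℝ f p ((0 : ℝ), (1 : ℝ))

/-- The modified Pohlmeyer–Lund–Regge system on a set `D ⊆ ℝ²`. -/
def mPLR (D : Set (ℝ × ℝ)) (q r qb rb φ : ℝ × ℝ → ℂ) : Prop :=
  ∀ p ∈ D,
    pd2 q p = -2 * qb p * Complex.exp (2 * φ p) ∧
    pd2 r p = 2 * rb p * Complex.exp (-2 * φ p) ∧
    pd1 φ p = 2 * q p * r p ∧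
    pd2 φ p = -2 * qb p * rb p ∧
    pd1 qb p = -2 * q p * Complex.exp (-2 * φ p) ∧
    pd1 rb p = 2 * r p * Complex.exp (2 * φ p)

open Filter Topology

theorem fderiv_const_mul_mul_cexp_const_mul_apply {E : Type*} [NormedAddCommGroup E]
    [NormedSpace ℝ E] {f g : E → ℂ} {x : E} (hf : DifferentiableAt ℝ f x)
    (hg : DifferentiableAt ℝ g x) (a k : ℂ) (v : E) :
    fderiv ℝ (fun y => a * f y * Complex.exp (k * g y)) x v
      = a * (fderiv ℝ f x v + k * f x * fderiv ℝ g x v) * Complex.exp (k * g x) := by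
  have hderiv : HasFDerivAt (fun y => a * f y * Complex.exp (k * g y)) _ x :=
    (hf.hasFDerivAt.const_mul a).mul (hg.hasFDerivAt.const_mul k).cexp
  rw [hderiv.fderiv]
  simp only [add_apply, smul_apply, smul_eq_mul]
  ring

theorem Filter.EventuallyEq.pd1_eq {f g : ℝ × ℝ → ℂ} {p : ℝ × ℝ} (h : f =ᶠ[𝓝 p] g) :
    pd1 f p = pd1 g p := by
  simp only [pd1, h.fderiv_eq]

theorem pd1_const_mul_mul_cexp_const_mul {f g : ℝ × ℝ → ℂ} {p : ℝ × ℝ}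
    (hf : DifferentiableAt ℝ f p) (hg : DifferentiableAt ℝ g p) (a k : ℂ) :
    pd1 (fun y => a * f y * Complex.exp (k * g y)) p
      = a * (pd1 f p + k * f p * pd1 g p) * Complex.exp (k * g p) :=
  fderiv_const_mul_mul_cexp_const_mul_apply hf hg a k _

theorem mPLR_second_order_q_r_general
    (D : Set (ℝ × ℝ)) (hD : IsOpen D) (q r qb rb φ : ℝ × ℝ → ℂ)
    (hqb : ContDiffOn ℝ 2 qb D) (hrb : ContDiffOn ℝ 2 rb D)
    (hφ : ContDiffOn ℝ 2 φ D)
    (h : mPLR D q r qb rb φ) :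
    ∀ p ∈ D,
      pd1 (pd2 q) p = 4 * q p + 4 * q p * r p * pd2 q p ∧
      pd1 (pd2 r) p = 4 * r p - 4 * q p * r p * pd2 r p := by
  intro p hp
  have hD_nhds : D ∈ 𝓝 p := hD.mem_nhds hp
  have hdiff {f : ℝ × ℝ → ℂ} (hf : ContDiffOn ℝ 2 f D) : DifferentiableAt ℝ f p :=
    (hf.contDiffAt hD_nhds).differentiableAt (by norm_num)
  have hq_tbar_near : pd2 q =ᶠ[𝓝 p] fun x => -2 * qb x * Complex.exp (2 * φ x) :=
    eventually_of_mem hD_nhds fun x hx => (h x hx).1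
  have hr_tbar_near : pd2 r =ᶠ[𝓝 p] fun x => 2 * rb x * Complex.exp (-2 * φ x) :=
    eventually_of_mem hD_nhds fun x hx => (h x hx).2.1
  obtain ⟨hq_tbar, hr_tbar, hφ_t, -, hqb_t, hrb_t⟩ := h p hp
  have hexp : Complex.exp (-2 * φ p) * Complex.exp (2 * φ p) = 1 := by
    rw [← Complex.exp_add, neg_mul, neg_add_cancel, Complex.exp_zero]
  rw [hq_tbar_near.pd1_eq, hr_tbar_near.pd1_eq,
    pd1_const_mul_mul_cexp_const_mul (hdiff hqb) (hdiff hφ),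
    pd1_const_mul_mul_cexp_const_mul (hdiff hrb) (hdiff hφ),
    hqb_t, hrb_t, hφ_t, hq_tbar, hr_tbar]
  constructor
  · linear_combination (4 * q p) * hexp
  · linear_combination (4 * r p) * hexp

theorem mPLR_second_order_q_r
    (D : Set (ℝ × ℝ)) (hD : IsOpen D) (q r qb rb φ : ℝ × ℝ → ℂ)
    (hq : ContDiffOn ℝ 2 q D) (hr : ContDiffOn ℝ 2 r D)
    (hqb : ContDiffOn ℝ 2 qb D) (hrb : ContDiffOn ℝ 2 rb D)
    (hφ : ContDiffOn ℝ 2 φ D)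
    (h : mPLR D q r qb rb φ) :
    ∀ p ∈ D,
      pd1 (pd2 q) p = 4 * q p + 4 * q p * r p * pd2 q p ∧
      pd1 (pd2 r) p = 4 * r p - 4 * q p * r p * pd2 r p :=
  mPLR_second_order_q_r_general D hD q r qb rb φ hqb hrb hφ h
end

section
/- Let D ⊆ ℝ² be open and let q, r, q̄, r̄, φ : D → ℂ be C² functions satisfying the mPLR system. Then on D the functions q̄ and r̄ satisfy the second-order system ∂²q̄/∂t∂t̄ = 4q̄ + 4q̄r̄·(∂q̄/∂t) and ∂²r̄/∂t∂t̄ = 4r̄ − 4q̄r̄·(∂r̄/∂t). -/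
/-!
By Clairaut, `∂ₜ∂ₜ̄ q̄ = ∂ₜ̄ (∂ₜ q̄) = ∂ₜ̄ (-2 q e^{-2φ})`. Expanding with `∂ₜ̄ q = -2 q̄ e^{2φ}` and
`∂ₜ̄ φ = -2 q̄ r̄` gives `4 q̄ + 4 q̄ r̄ · (-2 q e^{-2φ}) = 4 q̄ + 4 q̄ r̄ ∂ₜ q̄`; likewise for `r̄`.
-/

open Filter Topology

theorem pd1_pd2_comm {f : ℝ × ℝ → ℂ} {p : ℝ × ℝ} (hf : ContDiffAt ℝ 2 f p) :
    pd1 (pd2 f) p = pd2 (pd1 f) p := by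
  have hdf : DifferentiableAt ℝ (fderiv ℝ f) p :=
    (hf.fderiv_right (m := 1) (by norm_num)).differentiableAt one_ne_zero
  have hsymm := hf.isSymmSndFDerivAt minSmoothness_of_isRCLikeNormedField.le
  unfold pd1 pd2
  rw [fderiv_clm_apply hdf (differentiableAt_const _),
    fderiv_clm_apply hdf (differentiableAt_const _)]
  simp [hsymm ((1 : ℝ), (0 : ℝ)) ((0 : ℝ), (1 : ℝ))]

theorem Filter.EventuallyEq.pd2_eq {f g : ℝ × ℝ → ℂ} {p : ℝ × ℝ} (h : f =ᶠ[𝓝 p] g) :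
    pd2 f p = pd2 g p := by
  unfold pd2
  rw [h.fderiv_eq]

theorem pd2_const_mul_mul_cexp {f g : ℝ × ℝ → ℂ} {p : ℝ × ℝ} (c k : ℂ)
    (hf : DifferentiableAt ℝ f p) (hg : DifferentiableAt ℝ g p) :
    pd2 (fun x => c * f x * Complex.exp (k * g x)) p =
      c * Complex.exp (k * g p) * (pd2 f p + k * f p * pd2 g p) := by
  unfold pd2
  rw [((hf.hasFDerivAt.const_mul c).fun_mul (hg.hasFDerivAt.const_mul k).cexp).fderiv]
  simp only [add_apply, smul_apply, smul_eq_mul]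
  ring

theorem Complex.exp_neg_two_mul_mul_exp_two_mul (z : ℂ) :
    Complex.exp (-2 * z) * Complex.exp (2 * z) = 1 := by
  rw [← Complex.exp_add, show -2 * z + 2 * z = 0 by ring, Complex.exp_zero]

section mPLR

variable {D : Set (ℝ × ℝ)} {q r qb rb φ : ℝ × ℝ → ℂ} {p : ℝ × ℝ}

theorem mPLR.pd2_pd1_qb (h : mPLR D q r qb rb φ) (hD : D ∈ 𝓝 p)
    (hq : DifferentiableAt ℝ q p) (hφ : DifferentiableAt ℝ φ p) :
    pd2 (pd1 qb) p = 4 * qb p + 4 * qb p * rb p * pd1 qb p := by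
  have hpd1 : pd1 qb =ᶠ[𝓝 p] fun x => -2 * q x * Complex.exp (-2 * φ x) :=
    eventually_of_mem hD fun x hx => (h x hx).2.2.2.2.1
  obtain ⟨hq2, -, -, hφ2, hqb1, -⟩ := h p (mem_of_mem_nhds hD)
  rw [hpd1.pd2_eq, pd2_const_mul_mul_cexp _ _ hq hφ, hq2, hφ2, hqb1]
  linear_combination 4 * qb p * Complex.exp_neg_two_mul_mul_exp_two_mul (φ p)

theorem mPLR.pd2_pd1_rb (h : mPLR D q r qb rb φ) (hD : D ∈ 𝓝 p)
    (hr : DifferentiableAt ℝ r p) (hφ : DifferentiableAt ℝ φ p) :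
    pd2 (pd1 rb) p = 4 * rb p - 4 * qb p * rb p * pd1 rb p := by
  have hpd1 : pd1 rb =ᶠ[𝓝 p] fun x => 2 * r x * Complex.exp (2 * φ x) :=
    eventually_of_mem hD fun x hx => (h x hx).2.2.2.2.2
  obtain ⟨-, hr2, -, hφ2, -, hrb1⟩ := h p (mem_of_mem_nhds hD)
  rw [hpd1.pd2_eq, pd2_const_mul_mul_cexp _ _ hr hφ, hr2, hφ2, hrb1]
  linear_combination 4 * rb p * Complex.exp_neg_two_mul_mul_exp_two_mul (φ p)

end mPLR

theorem mPLR_second_order_qb_rb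
    (D : Set (ℝ × ℝ)) (hD : IsOpen D) (q r qb rb φ : ℝ × ℝ → ℂ)
    (hq : ContDiffOn ℝ 2 q D) (hr : ContDiffOn ℝ 2 r D)
    (hqb : ContDiffOn ℝ 2 qb D) (hrb : ContDiffOn ℝ 2 rb D)
    (hφ : ContDiffOn ℝ 2 φ D)
    (h : mPLR D q r qb rb φ) :
    ∀ p ∈ D,
      pd1 (pd2 qb) p = 4 * qb p + 4 * qb p * rb p * pd1 qb p ∧
      pd1 (pd2 rb) p = 4 * rb p - 4 * qb p * rb p * pd1 rb p := by
  intro p hp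
  have hDp : D ∈ 𝓝 p := hD.mem_nhds hp
  have hφp := (hφ.contDiffAt hDp).differentiableAt two_ne_zero
  rw [pd1_pd2_comm (hqb.contDiffAt hDp), pd1_pd2_comm (hrb.contDiffAt hDp)]
  exact ⟨h.pd2_pd1_qb hDp ((hq.contDiffAt hDp).differentiableAt two_ne_zero) hφp,
    h.pd2_pd1_rb hDp ((hr.contDiffAt hDp).differentiableAt two_ne_zero) hφp⟩
end

section
/- Let D ⊆ ℝ² be open and let q, r, q̄, r̄, φ : D → ℂ be C¹ functions satisfying the mPLR system, and let ζ ∈ ℂ with ζ ≠ 0. Define the 2×2 complex matrix-valued functions B₁ = [[2qr + ζ, −2q], [2rζ, −2qr − ζ]] and B̄₁ = [[ζ⁻¹, −2q̄·exp(2φ)·ζ⁻¹], [2r̄·exp(−2φ), −ζ⁻¹]] on D. Then the zero-curvature equation ∂B₁/∂t̄ − ∂B̄₁/∂t = B̄₁·B₁ − B₁·B̄₁ holds at every point of D (an identity of 2×2 matrices, derivatives taken entrywise). -/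
/-- Entrywise `t`-derivative of a matrix-valued function. -/
noncomputable def matPd1 (F : ℝ × ℝ → Matrix (Fin 2) (Fin 2) ℂ) (p : ℝ × ℝ) :
    Matrix (Fin 2) (Fin 2) ℂ :=
  Matrix.of fun i j => pd1 (fun x => F x i j) p

/-- Entrywise `t̄`-derivative of a matrix-valued function. -/
noncomputable def matPd2 (F : ℝ × ℝ → Matrix (Fin 2) (Fin 2) ℂ) (p : ℝ × ℝ) :
    Matrix (Fin 2) (Fin 2) ℂ :=
  Matrix.of fun i j => pd2 (fun x => F x i j) p


/-!
Both sides are computed entrywise. On the left, the product and chain rules express the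
derivatives of the entries of `B₁` and `B̄₁` through `∂q/∂t̄, ∂r/∂t̄, ∂q̄/∂t, ∂r̄/∂t, ∂φ/∂t`, and the
mPLR system replaces these by polynomials in `q, r, q̄, r̄, exp (±2φ)`. What remains is a polynomial
identity in these quantities and `ζ, ζ⁻¹`, which holds because `exp (2φ) exp (-2φ) = 1` and `ζ ζ⁻¹ = 1`.
-/

section DirectionalDeriv

variable {E : Type*} [NormedAddCommGroup E] [NormedSpace ℝ E] {f g : E → ℂ} {x v : E}

theorem fderiv_fun_mul_apply (hf : DifferentiableAt ℝ f x) (hg : DifferentiableAt ℝ g x) :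
    fderiv ℝ (fun y => f y * g y) x v = fderiv ℝ f x v * g x + f x * fderiv ℝ g x v := by
  rw [fderiv_fun_mul hf hg, add_apply, smul_apply, smul_apply, smul_eq_mul, smul_eq_mul]
  ring

theorem fderiv_const_mul_apply (hf : DifferentiableAt ℝ f x) (c : ℂ) :
    fderiv ℝ (fun y => c * f y) x v = c * fderiv ℝ f x v := by
  rw [fderiv_const_mul hf, smul_apply, smul_eq_mul]

theorem fderiv_mul_const_apply (hf : DifferentiableAt ℝ f x) (c : ℂ) :
    fderiv ℝ (fun y => f y * c) x v = fderiv ℝ f x v * c := by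
  rw [fderiv_mul_const hf, smul_apply, smul_eq_mul, mul_comm]

theorem fderiv_cexp_apply (hf : DifferentiableAt ℝ f x) :
    fderiv ℝ (fun y => Complex.exp (f y)) x v = Complex.exp (f x) * fderiv ℝ f x v := by
  rw [hf.hasFDerivAt.cexp.fderiv, smul_apply, smul_eq_mul]

end DirectionalDeriv

theorem matPd1_of_fin_two (a b c d : ℝ × ℝ → ℂ) (p : ℝ × ℝ) :
    matPd1 (fun x => !![a x, b x; c x, d x]) p = !![pd1 a p, pd1 b p; pd1 c p, pd1 d p] := by
  ext i j
  fin_cases i <;> fin_cases j <;> rfl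

theorem matPd2_of_fin_two (a b c d : ℝ × ℝ → ℂ) (p : ℝ × ℝ) :
    matPd2 (fun x => !![a x, b x; c x, d x]) p = !![pd2 a p, pd2 b p; pd2 c p, pd2 d p] := by
  ext i j
  fin_cases i <;> fin_cases j <;> rfl

noncomputable def laxB1 (q r ζ : ℂ) : Matrix (Fin 2) (Fin 2) ℂ :=
  !![2 * q * r + ζ, -2 * q; 2 * r * ζ, -(2 * q * r) - ζ]

noncomputable def laxB1bar (qb rb φ ζ : ℂ) : Matrix (Fin 2) (Fin 2) ℂ :=
  !![ζ⁻¹, -2 * qb * Complex.exp (2 * φ) * ζ⁻¹; 2 * rb * Complex.exp (-2 * φ), -ζ⁻¹]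

section LaxDerivatives

variable {q r qb rb φ : ℝ × ℝ → ℂ} {p : ℝ × ℝ} (ζ : ℂ)

theorem matPd2_laxB1 (hq : DifferentiableAt ℝ q p) (hr : DifferentiableAt ℝ r p) :
    matPd2 (fun x => laxB1 (q x) (r x) ζ) p =
      !![2 * pd2 q p * r p + 2 * q p * pd2 r p, -2 * pd2 q p;
        2 * pd2 r p * ζ, -(2 * pd2 q p * r p + 2 * q p * pd2 r p)] := by
  simp only [laxB1, matPd2_of_fin_two, pd2, fderiv_add_const, fderiv_sub_const, fderiv_fun_neg, neg_apply,
    fderiv_fun_mul_apply (hq.const_mul 2) hr, fderiv_mul_const_apply (hr.const_mul 2),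
    fderiv_const_mul_apply hq, fderiv_const_mul_apply hr]

theorem matPd1_laxB1bar (hqb : DifferentiableAt ℝ qb p) (hrb : DifferentiableAt ℝ rb p)
    (hφ : DifferentiableAt ℝ φ p) :
    matPd1 (fun x => laxB1bar (qb x) (rb x) (φ x) ζ) p =
      !![0, (-2 * pd1 qb p * Complex.exp (2 * φ p) +
          -2 * qb p * (Complex.exp (2 * φ p) * (2 * pd1 φ p))) * ζ⁻¹;
        2 * pd1 rb p * Complex.exp (-2 * φ p) +
          2 * rb p * (Complex.exp (-2 * φ p) * (-2 * pd1 φ p)), 0] := by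
  have he := (hφ.const_mul 2).cexp
  have he' := (hφ.const_mul (-2)).cexp
  simp only [laxB1bar, matPd1_of_fin_two, pd1, fderiv_const_apply, zero_apply,
    fderiv_mul_const_apply (f := fun x => -2 * qb x * Complex.exp (2 * φ x))
      ((hqb.const_mul (-2)).mul he),
    fderiv_fun_mul_apply (hqb.const_mul (-2)) he, fderiv_fun_mul_apply (hrb.const_mul 2) he',
    fderiv_const_mul_apply hqb, fderiv_const_mul_apply hrb,
    fderiv_cexp_apply (hφ.const_mul 2), fderiv_cexp_apply (hφ.const_mul (-2)),
    fderiv_const_mul_apply hφ]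

end LaxDerivatives

/- `q_tb, r_tb, φ_t, qb_t, rb_t` stand for `∂q/∂t̄, ∂r/∂t̄, ∂φ/∂t, ∂q̄/∂t, ∂r̄/∂t`. -/
open Complex in
theorem laxB1_commutator_eq_of_mPLR {q r qb rb φ ζ q_tb r_tb φ_t qb_t rb_t : ℂ} (hζ : ζ ≠ 0)
    (hq_tb : q_tb = -2 * qb * exp (2 * φ)) (hr_tb : r_tb = 2 * rb * exp (-2 * φ))
    (hφ_t : φ_t = 2 * q * r) (hqb_t : qb_t = -2 * q * exp (-2 * φ))
    (hrb_t : rb_t = 2 * r * exp (2 * φ)) :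
    !![2 * q_tb * r + 2 * q * r_tb, -2 * q_tb; 2 * r_tb * ζ, -(2 * q_tb * r + 2 * q * r_tb)] -
      !![0, (-2 * qb_t * exp (2 * φ) + -2 * qb * (exp (2 * φ) * (2 * φ_t))) * ζ⁻¹;
        2 * rb_t * exp (-2 * φ) + 2 * rb * (exp (-2 * φ) * (-2 * φ_t)), 0] =
      laxB1bar qb rb φ ζ * laxB1 q r ζ - laxB1 q r ζ * laxB1bar qb rb φ ζ := by
  subst hq_tb hr_tb hφ_t hqb_t hrb_t
  have hexp : exp (-2 * φ) = (exp (2 * φ))⁻¹ := by rw [neg_mul, exp_neg]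
  rw [laxB1, laxB1bar, Matrix.mul_fin_two, Matrix.mul_fin_two, hexp]
  ext i j
  fin_cases i <;> fin_cases j <;>
    simp only [Matrix.sub_apply, Matrix.of_apply, Matrix.cons_val', Matrix.cons_val_zero,
      Matrix.cons_val_one, Matrix.cons_val_fin_one, Fin.zero_eta, Fin.mk_one, Fin.isValue] <;>
    field_simp <;> ring

theorem mPLR_zero_curvature
    (D : Set (ℝ × ℝ)) (hD : IsOpen D) (q r qb rb φ : ℝ × ℝ → ℂ)
    (hq : ContDiffOn ℝ 1 q D) (hr : ContDiffOn ℝ 1 r D)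
    (hqb : ContDiffOn ℝ 1 qb D) (hrb : ContDiffOn ℝ 1 rb D)
    (hφ : ContDiffOn ℝ 1 φ D)
    (h : mPLR D q r qb rb φ)
    (ζ : ℂ) (hζ : ζ ≠ 0)
    (B1 : ℝ × ℝ → Matrix (Fin 2) (Fin 2) ℂ)
    (hB1 : B1 = fun p =>
      !![2 * q p * r p + ζ, -2 * q p;
         2 * r p * ζ, -(2 * q p * r p) - ζ])
    (B1b : ℝ × ℝ → Matrix (Fin 2) (Fin 2) ℂ)
    (hB1b : B1b = fun p =>
      !![ζ⁻¹, -2 * qb p * Complex.exp (2 * φ p) * ζ⁻¹;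
         2 * rb p * Complex.exp (-2 * φ p), -ζ⁻¹]) :
    ∀ p ∈ D, matPd2 B1 p - matPd1 B1b p = B1b p * B1 p - B1 p * B1b p := by
  intro p hp
  obtain ⟨hq_tb, hr_tb, hφ_t, -, hqb_t, hrb_t⟩ := h p hp
  have hdiff {f : ℝ × ℝ → ℂ} (hf : ContDiffOn ℝ 1 f D) : DifferentiableAt ℝ f p :=
    (hf.differentiableOn one_ne_zero).differentiableAt (hD.mem_nhds hp)
  replace hB1 : B1 = fun x => laxB1 (q x) (r x) ζ := hB1
  replace hB1b : B1b = fun x => laxB1bar (qb x) (rb x) (φ x) ζ := hB1b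
  subst hB1 hB1b
  rw [matPd2_laxB1 ζ (hdiff hq) (hdiff hr), matPd1_laxB1bar ζ (hdiff hqb) (hdiff hrb) (hdiff hφ)]
  exact laxB1_commutator_eq_of_mPLR hζ hq_tb hr_tb hφ_t hqb_t hrb_t
end

section
/- Let D ⊆ ℝ² be open, let q, r, q̄, r̄, φ : D → ℂ be differentiable functions satisfying the mPLR system, let α, β ∈ ℂ, and let λ > 0 be real. Set D_λ := {(t, t̄) ∈ ℝ² : (λt, λ⁻¹t̄) ∈ D} and define on D_λ the functions q̃(t,t̄) := λ^{2α+1}·q(λt, λ⁻¹t̄), r̃(t,t̄) := λ^{−2α}·r(λt, λ⁻¹t̄), q̄̃(t,t̄) := λ^{2β}·q̄(λt, λ⁻¹t̄), r̄̃(t,t̄) := λ^{−2β−1}·r̄(λt, λ⁻¹t̄), and φ̃(t,t̄) := φ(λt, λ⁻¹t̄) + (α − β)·log λ, where λ^{w} := exp(w·log λ) for w ∈ ℂ. Then (q̃, r̃, q̄̃, r̄̃, φ̃) also satisfies the mPLR system on D_λ. -/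
/-- `λ^w := exp (w · log λ)` for real `λ > 0` and complex `w`. -/
noncomputable def cpowR (lam : ℝ) (w : ℂ) : ℂ := Complex.exp (w * Real.log lam)

/-!
The rescaling `(t, t̄) ↦ (λt, λ⁻¹t̄)` multiplies `∂_t` by `λ` and `∂_t̄` by `λ⁻¹`, and the shift of
`φ` by `(α - β) log λ` multiplies `exp (±2φ)` by `λ^{±2(α - β)}`. The weights `2α + 1`, `-2α`, `2β`,
`-2β - 1` are chosen so that in each of the six equations the powers of `λ` on both sides agree.
-/

open ContinuousLinearMap in
noncomputable def hyperbolicScaling (lam : ℝ) (hlam : lam ≠ 0) : (ℝ × ℝ) ≃L[ℝ] ℝ × ℝ :=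
  ContinuousLinearEquiv.equivOfInverse
    ((lam • fst ℝ ℝ ℝ).prod (lam⁻¹ • snd ℝ ℝ ℝ)) ((lam⁻¹ • fst ℝ ℝ ℝ).prod (lam • snd ℝ ℝ ℝ))
    (fun p => by simp [hlam]) (fun p => by simp [hlam])

section PartialDerivatives

variable {lam : ℝ} (f : ℝ × ℝ → ℂ)

-- Where `f` is not differentiable, neither side is, and `fderiv` is `0` on both.

theorem pd1_comp_hyperbolicScaling (hlam : lam ≠ 0) (x : ℝ × ℝ) :
    pd1 (fun p => f (lam * p.1, lam⁻¹ * p.2)) x = lam * pd1 f (lam * x.1, lam⁻¹ * x.2) := by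
  change fderiv ℝ (f ∘ hyperbolicScaling lam hlam) x _ = _
  rw [ContinuousLinearEquiv.comp_right_fderiv]
  have : hyperbolicScaling lam hlam ((1 : ℝ), (0 : ℝ)) = lam • ((1 : ℝ), (0 : ℝ)) := by
    simp [hyperbolicScaling]
  rw [ContinuousLinearMap.comp_apply, ContinuousLinearEquiv.coe_coe, this, map_smul,
    Complex.real_smul]
  rfl

theorem pd2_comp_hyperbolicScaling (hlam : lam ≠ 0) (x : ℝ × ℝ) :
    pd2 (fun p => f (lam * p.1, lam⁻¹ * p.2)) x = (lam : ℂ)⁻¹ * pd2 f (lam * x.1, lam⁻¹ * x.2) := by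
  change fderiv ℝ (f ∘ hyperbolicScaling lam hlam) x _ = _
  rw [ContinuousLinearEquiv.comp_right_fderiv]
  have : hyperbolicScaling lam hlam ((0 : ℝ), (1 : ℝ)) = lam⁻¹ • ((0 : ℝ), (1 : ℝ)) := by
    simp [hyperbolicScaling]
  rw [ContinuousLinearMap.comp_apply, ContinuousLinearEquiv.coe_coe, this, map_smul,
    Complex.real_smul, Complex.ofReal_inv]
  rfl

theorem pd1_const_mul (c : ℂ) : pd1 (fun p => c * f p) = fun p => c * pd1 f p := by
  ext p
  simp [pd1, ← smul_eq_mul, ← Pi.smul_def, fderiv_const_smul_field]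

theorem pd2_const_mul (c : ℂ) : pd2 (fun p => c * f p) = fun p => c * pd2 f p := by
  ext p
  simp [pd2, ← smul_eq_mul, ← Pi.smul_def, fderiv_const_smul_field]

theorem pd1_add_const (c : ℂ) : pd1 (fun p => f p + c) = pd1 f := by
  ext p
  simp [pd1, fderiv_add_const]

theorem pd2_add_const (c : ℂ) : pd2 (fun p => f p + c) = pd2 f := by
  ext p
  simp [pd2, fderiv_add_const]

end PartialDerivatives

section RealPowers

variable {lam : ℝ}

theorem cpowR_mul_cpowR (a b c : ℂ) (h : a + b = c) :
    cpowR lam a * cpowR lam b = cpowR lam c := by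
  rw [cpowR, cpowR, cpowR, ← Complex.exp_add, ← h, add_mul]

theorem cpowR_mul_cpowR_eq (a b c d : ℂ) (h : a + b = c + d) :
    cpowR lam a * cpowR lam b = cpowR lam c * cpowR lam d := by
  rw [cpowR_mul_cpowR a b _ rfl, cpowR_mul_cpowR c d _ rfl, h]

theorem cpowR_one (hlam : 0 < lam) : cpowR lam 1 = lam := by
  rw [cpowR, one_mul, ← Complex.ofReal_exp, Real.exp_log hlam]

theorem cpowR_neg_one (hlam : 0 < lam) : cpowR lam (-1) = (lam : ℂ)⁻¹ := by
  rw [cpowR, neg_one_mul, Complex.exp_neg, ← one_mul (Real.log lam : ℂ), ← cpowR, cpowR_one hlam]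

theorem exp_mul_add_mul_log (k z w : ℂ) :
    Complex.exp (k * (z + w * Real.log lam)) = Complex.exp (k * z) * cpowR lam (k * w) := by
  rw [cpowR, ← Complex.exp_add]
  ring_nf

end RealPowers

theorem mPLR_scaling_symmetry_general
    (D : Set (ℝ × ℝ)) (q r qb rb φ : ℝ × ℝ → ℂ)
    (h : mPLR D q r qb rb φ)
    (α β : ℂ) (lam : ℝ) (hlam : 0 < lam) :
    mPLR {p : ℝ × ℝ | (lam * p.1, lam⁻¹ * p.2) ∈ D}
      (fun p => cpowR lam (2 * α + 1) * q (lam * p.1, lam⁻¹ * p.2))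
      (fun p => cpowR lam (-(2 * α)) * r (lam * p.1, lam⁻¹ * p.2))
      (fun p => cpowR lam (2 * β) * qb (lam * p.1, lam⁻¹ * p.2))
      (fun p => cpowR lam (-(2 * β) - 1) * rb (lam * p.1, lam⁻¹ * p.2))
      (fun p => φ (lam * p.1, lam⁻¹ * p.2) + (α - β) * Real.log lam) := by
  intro p hp
  obtain ⟨e1, e2, e3, e4, e5, e6⟩ := h _ hp
  simp only [pd1_const_mul, pd2_const_mul, pd1_add_const, pd2_add_const,
    pd1_comp_hyperbolicScaling _ hlam.ne', pd2_comp_hyperbolicScaling _ hlam.ne',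
    e1, e2, e3, e4, e5, e6, exp_mul_add_mul_log]
  rw [← cpowR_neg_one hlam, ← cpowR_one hlam]
  refine ⟨?_, ?_, ?_, ?_, ?_, ?_⟩
  · linear_combination (-2 * qb _ * Complex.exp (2 * φ _)) *
      cpowR_mul_cpowR_eq (2 * α + 1) (-1) (2 * β) (2 * (α - β)) (by ring)
  · linear_combination (2 * rb _ * Complex.exp (-2 * φ _)) *
      cpowR_mul_cpowR_eq (-(2 * α)) (-1) (-(2 * β) - 1) (-2 * (α - β)) (by ring)
  · linear_combination (-2 * q _ * r _) * cpowR_mul_cpowR (2 * α + 1) (-(2 * α)) 1 (by ring)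
  · linear_combination (2 * qb _ * rb _) * cpowR_mul_cpowR (2 * β) (-(2 * β) - 1) (-1) (by ring)
  · linear_combination (-2 * q _ * Complex.exp (-2 * φ _)) *
      cpowR_mul_cpowR_eq (2 * β) 1 (2 * α + 1) (-2 * (α - β)) (by ring)
  · linear_combination (2 * r _ * Complex.exp (2 * φ _)) *
      cpowR_mul_cpowR_eq (-(2 * β) - 1) 1 (-(2 * α)) (2 * (α - β)) (by ring)

theorem mPLR_scaling_symmetry
    (D : Set (ℝ × ℝ)) (hD : IsOpen D) (q r qb rb φ : ℝ × ℝ → ℂ)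
    (hq : DifferentiableOn ℝ q D) (hr : DifferentiableOn ℝ r D)
    (hqb : DifferentiableOn ℝ qb D) (hrb : DifferentiableOn ℝ rb D)
    (hφ : DifferentiableOn ℝ φ D)
    (h : mPLR D q r qb rb φ)
    (α β : ℂ) (lam : ℝ) (hlam : 0 < lam) :
    mPLR {p : ℝ × ℝ | (lam * p.1, lam⁻¹ * p.2) ∈ D}
      (fun p => cpowR lam (2 * α + 1) * q (lam * p.1, lam⁻¹ * p.2))
      (fun p => cpowR lam (-(2 * α)) * r (lam * p.1, lam⁻¹ * p.2))
      (fun p => cpowR lam (2 * β) * qb (lam * p.1, lam⁻¹ * p.2))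
      (fun p => cpowR lam (-(2 * β) - 1) * rb (lam * p.1, lam⁻¹ * p.2))
      (fun p => φ (lam * p.1, lam⁻¹ * p.2) + (α - β) * Real.log lam) :=
  mPLR_scaling_symmetry_general D q r qb rb φ h α β lam hlam
end

section
/- Let I ⊆ ℝ be an open interval with 0 ∉ I, let α, β ∈ ℂ, let c ∈ ℂ with c ≠ 0, and let q̄, r̄ : I → ℂ be C² functions with q̄ nonvanishing, satisfying on I: q̄″ = (4c/t)·q̄ − ((2α+1)/t)·q̄′ + (q̄′)²·r̄′, r̄″ = (4c/t)·r̄ + (2α/t)·r̄′ − q̄′·(r̄′)², and 4q̄r̄ = 2(β − α)/c + (t/c)·q̄′·r̄′. Define y := t·q̄′/q̄ and z := q̄·r̄′/2. Then y and z are differentiable on I and satisfy t·y′ = 2y²z − y² − 2αy + 4ct and t·z′ = −2yz² + 2yz + 2αz + β − α. -/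
/-!
After the quotient and product rules, both equations are rational identities in
`t, q̄, q̄′, q̄″, r̄, r̄′, r̄″` once `t q̄″` and `t r̄″` are eliminated with the two
second-order equations; the equation for `z` also needs the first integral `4 q̄ r̄ = …`
to eliminate `c q̄ r̄`.
-/

theorem ContDiffOn.differentiableOn_deriv_of_isOpen {𝕜 F : Type*} [NontriviallyNormedField 𝕜]
    [NormedAddCommGroup F] [NormedSpace 𝕜 F] {f : 𝕜 → F} {s : Set 𝕜} {n : WithTop ℕ∞}
    (hf : ContDiffOn 𝕜 n f s) (hs : IsOpen s) (hn : 2 ≤ n) :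
    DifferentiableOn 𝕜 (deriv f) s :=
  (hf.deriv_of_isOpen hs (m := 1) hn).differentiableOn one_ne_zero

theorem HasDerivAt.ofReal_mul_div {g q : ℝ → ℂ} {g' q' : ℂ} {t : ℝ}
    (hg : HasDerivAt g g' t) (hq : HasDerivAt q q' t) (hq0 : q t ≠ 0) :
    HasDerivAt (fun s : ℝ => (s : ℂ) * g s / q s)
      (((g t + t * g') * q t - t * g t * q') / q t ^ 2) t := by
  have hT : HasDerivAt (fun s : ℝ => (s : ℂ)) 1 t := by
    simpa using (hasDerivAt_id t).ofReal_comp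
  exact ((hT.mul hg).div hq hq0).congr_deriv (by simp only [Pi.mul_apply]; ring)

theorem painleve_y_eq_of_ode {α c t q q₁ q₂ r₁ : ℂ} (ht : t ≠ 0) (hq : q ≠ 0)
    (h : q₂ = 4 * c / t * q - (2 * α + 1) / t * q₁ + q₁ ^ 2 * r₁) :
    t * (((q₁ + t * q₂) * q - t * q₁ * q₁) / q ^ 2)
      = 2 * (t * q₁ / q) ^ 2 * (q * r₁ / 2) - (t * q₁ / q) ^ 2 - 2 * α * (t * q₁ / q)
        + 4 * c * t := by
  rw [h]
  field_simp
  ring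

theorem painleve_z_eq_of_ode {α β c t q q₁ r r₁ r₂ : ℂ} (ht : t ≠ 0) (hc : c ≠ 0) (hq : q ≠ 0)
    (h : r₂ = 4 * c / t * r + 2 * α / t * r₁ - q₁ * r₁ ^ 2)
    (hint : 4 * q * r = 2 * (β - α) / c + t / c * q₁ * r₁) :
    t * ((q₁ * r₁ + q * r₂) / 2)
      = -2 * (t * q₁ / q) * (q * r₁ / 2) ^ 2 + 2 * (t * q₁ / q) * (q * r₁ / 2)
        + 2 * α * (q * r₁ / 2) + β - α := by
  have hint' : c * (4 * q * r) = 2 * (β - α) + t * q₁ * r₁ := by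
    rw [hint]
    field_simp
  rw [h]
  field_simp
  linear_combination hint'

theorem PIII_from_similarity_ODE
    (I : Set ℝ) (hI : IsOpen I) (hI0 : (0 : ℝ) ∉ I)
    (α β c : ℂ) (hc : c ≠ 0)
    (qb rb : ℝ → ℂ)
    (hqb : ContDiffOn ℝ 2 qb I) (hrb : ContDiffOn ℝ 2 rb I)
    (hqb0 : ∀ t ∈ I, qb t ≠ 0)
    (heq1 : ∀ t ∈ I, deriv (deriv qb) t
      = (4 * c / (t : ℂ)) * qb t - ((2 * α + 1) / (t : ℂ)) * deriv qb t
        + (deriv qb t) ^ 2 * deriv rb t)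
    (heq2 : ∀ t ∈ I, deriv (deriv rb) t
      = (4 * c / (t : ℂ)) * rb t + (2 * α / (t : ℂ)) * deriv rb t
        - deriv qb t * (deriv rb t) ^ 2)
    (heq3 : ∀ t ∈ I, 4 * qb t * rb t
      = 2 * (β - α) / c + ((t : ℂ) / c) * deriv qb t * deriv rb t)
    (y z : ℝ → ℂ)
    (hy : y = fun (t : ℝ) => (t : ℂ) * deriv qb t / qb t)
    (hz : z = fun (t : ℝ) => qb t * deriv rb t / 2) :
    DifferentiableOn ℝ y I ∧ DifferentiableOn ℝ z I ∧
    ∀ t ∈ I,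
      (t : ℂ) * deriv y t
        = 2 * (y t) ^ 2 * z t - (y t) ^ 2 - 2 * α * y t + 4 * c * (t : ℂ) ∧
      (t : ℂ) * deriv z t
        = -2 * y t * (z t) ^ 2 + 2 * y t * z t + 2 * α * z t + β - α := by
  subst hy hz
  have hq₁ := hqb.differentiableOn two_ne_zero
  have hr₁ := hrb.differentiableOn two_ne_zero
  have hq₂ := hqb.differentiableOn_deriv_of_isOpen hI le_rfl
  have hr₂ := hrb.differentiableOn_deriv_of_isOpen hI le_rfl
  have hy : ∀ t ∈ I, HasDerivAt (fun s : ℝ => (s : ℂ) * deriv qb s / qb s)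
      (((deriv qb t + t * deriv (deriv qb) t) * qb t - t * deriv qb t * deriv qb t)
        / qb t ^ 2) t := fun t ht =>
    (hq₂.hasDerivAt (hI.mem_nhds ht)).ofReal_mul_div (hq₁.hasDerivAt (hI.mem_nhds ht))
      (hqb0 t ht)
  have hz : ∀ t ∈ I, HasDerivAt (fun s : ℝ => qb s * deriv rb s / 2)
      ((deriv qb t * deriv rb t + qb t * deriv (deriv rb) t) / 2) t := fun t ht =>
    ((hq₁.hasDerivAt (hI.mem_nhds ht)).mul (hr₂.hasDerivAt (hI.mem_nhds ht))).div_const 2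
  refine ⟨fun t ht => (hy t ht).differentiableAt.differentiableWithinAt,
    fun t ht => (hz t ht).differentiableAt.differentiableWithinAt, fun t ht => ?_⟩
  have ht0 : (t : ℂ) ≠ 0 := Complex.ofReal_ne_zero.mpr (ne_of_mem_of_not_mem ht hI0)
  constructor
  · rw [(hy t ht).deriv]
    exact painleve_y_eq_of_ode ht0 (hqb0 t ht) (heq1 t ht)
  · rw [(hz t ht).deriv]
    exact painleve_z_eq_of_ode ht0 hc (hqb0 t ht) (heq2 t ht) (heq3 t ht)
end

section
/- Let I ⊆ ℝ be an open interval, let α, β ∈ ℂ, and let q, r : I → ℂ be C² functions with q nonvanishing, satisfying on I the similarity conditions t·q′ + q″/2 − 2q²r′ − 4q³r² = −(2α + 1)·q and 2t·qr + q′r − qr′ − 2q²r² = β − α. Define y := 2qr and z := 2t + q′/q. Then y and z are differentiable on I and satisfy the fourth Painlevé system y′ = y·(2z − y − 2t) + 2(α − β) and z′ = z·(2y − z + 2t) − 4β. -/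
theorem PIV_from_similarity
    (I : Set ℝ) (hI : IsOpen I) (α β : ℂ)
    (q r : ℝ → ℂ)
    (hq : ContDiffOn ℝ 2 q I) (hr : ContDiffOn ℝ 2 r I)
    (hq0 : ∀ t ∈ I, q t ≠ 0)
    (hsim1 : ∀ t ∈ I,
      (t : ℂ) * deriv q t + deriv (deriv q) t / 2
        - 2 * (q t) ^ 2 * deriv r t - 4 * (q t) ^ 3 * (r t) ^ 2
      = -(2 * α + 1) * q t)
    (hsim2 : ∀ t ∈ I,
      2 * (t : ℂ) * q t * r t + deriv q t * r t - q t * deriv r t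
        - 2 * (q t) ^ 2 * (r t) ^ 2
      = β - α)
    (y z : ℝ → ℂ)
    (hy : y = fun (t : ℝ) => 2 * q t * r t)
    (hz : z = fun (t : ℝ) => 2 * (t : ℂ) + deriv q t / q t) :
    DifferentiableOn ℝ y I ∧ DifferentiableOn ℝ z I ∧
    ∀ t ∈ I,
      deriv y t = y t * (2 * z t - y t - 2 * (t : ℂ)) + 2 * (α - β) ∧
      deriv z t = z t * (2 * y t - z t + 2 * (t : ℂ)) - 4 * β := by
  have hq1 : ContDiffOn ℝ 1 (deriv q) I := hq.deriv_of_isOpen hI (by norm_num)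
  have hdq : ∀ t ∈ I, HasDerivAt q (deriv q t) t := fun t ht =>
    ((hq.differentiableOn (by norm_num)).differentiableAt (hI.mem_nhds ht)).hasDerivAt
  have hdr : ∀ t ∈ I, HasDerivAt r (deriv r t) t := fun t ht =>
    ((hr.differentiableOn (by norm_num)).differentiableAt (hI.mem_nhds ht)).hasDerivAt
  have hddq : ∀ t ∈ I, HasDerivAt (deriv q) (deriv (deriv q) t) t := fun t ht =>
    ((hq1.differentiableOn (by norm_num)).differentiableAt (hI.mem_nhds ht)).hasDerivAt
  have hdy : ∀ t ∈ I, HasDerivAt y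
      (2 * (deriv q t * r t + q t * deriv r t)) t := by
    intro t ht
    subst hy
    have := ((hdq t ht).mul (hdr t ht)).const_mul (2 : ℂ)
    simpa [mul_assoc] using this
  have hdz : ∀ t ∈ I, HasDerivAt z
      (2 + (deriv (deriv q) t * q t - deriv q t * deriv q t) / (q t) ^ 2) t := by
    intro t ht
    subst hz
    have h1 : HasDerivAt (fun t : ℝ => 2 * (t : ℂ)) 2 t := by
      simpa using ((hasDerivAt_id t).ofReal_comp.const_mul (2 : ℂ))
    exact h1.add (((hddq t ht).div (hdq t ht) (hq0 t ht)))
  refine ⟨fun t ht => ((hdy t ht).differentiableAt).differentiableWithinAt,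
    fun t ht => ((hdz t ht).differentiableAt).differentiableWithinAt, fun t ht => ?_⟩
  have e1 := hsim1 t ht
  have e2 := hsim2 t ht
  have hq0t := hq0 t ht
  have key2 : deriv q t / q t * q t = deriv q t := div_mul_cancel₀ _ hq0t
  have key3 : (deriv (deriv q) t * q t - deriv q t * deriv q t) / (q t) ^ 2 * (q t) ^ 2
      = deriv (deriv q) t * q t - deriv q t * deriv q t :=
    div_mul_cancel₀ _ (pow_ne_zero 2 hq0t)
  constructor
  · rw [(hdy t ht).deriv, hy, hz]
    simp only
    linear_combination (-2 : ℂ) * e2 - (4 * r t) * key2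
  · have h2 : (q t) ^ 2 * (deriv z t) =
        (q t) ^ 2 * (z t * (2 * y t - z t + 2 * (t : ℂ)) - 4 * β) := by
      rw [(hdz t ht).deriv, hy, hz]
      simp only
      linear_combination (2 * q t) * e1 - (4 * (q t) ^ 2) * e2 + key3
        + (2 * (t : ℂ) * q t - 4 * (q t) ^ 2 * r t + deriv q t / q t * q t + deriv q t) * key2
    exact mul_left_cancel₀ (pow_ne_zero 2 hq0t) h2
end

section
/- Let I ⊆ ℝ be an open interval, let α ∈ ℂ, and let q, r : I → ℂ be C² functions with q nonvanishing, satisfying on I the similarity conditions 2t·q + q″/2 − 2q²r′ − 4q³r² = 0 and 2t·qr + (q″r + qr″ − q′r′)/2 − 4q³r³ = −α. Define y := −q′/(2q) and z := −q·r′ − 2q²r². Then y and z are differentiable on I and satisfy y′ = 2y² + 2z + 2t and z′ = −4yz + 2α; equivalently, in the variable s = 2t, they satisfy the second Painlevé Hamiltonian system dy/ds = y² + z + s/2 and dz/ds = −2yz + α. -/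
/-!
Writing `a, b, c` for `q, q', q''` and `u, v, w` for `r, r', r''` at a point, the quotient and
product rules give `y' = (b² - a c) / (2 a²)` and `z' = -(b v + a w) - 4 a u (b u + a v)`.
With `E₁, E₂` the left minus right sides of the two similarity conditions,
`y' - (2y² + 2z + 2t) = -E₁ / a` and `z' - (-4yz + 2α) = 2u E₁ - 2E₂`.
The system in `s = 2t` then follows from the chain rule for `u ↦ f (u / 2)`.
-/

theorem ContDiffOn.hasDerivAt_of_isOpen {𝕜 F : Type*} [NontriviallyNormedField 𝕜]
    [NormedAddCommGroup F] [NormedSpace 𝕜 F] {n : WithTop ℕ∞} {f : 𝕜 → F} {s : Set 𝕜} {x : 𝕜}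
    (hf : ContDiffOn 𝕜 n f s) (hs : IsOpen s) (hn : n ≠ 0) (hx : x ∈ s) :
    HasDerivAt f (deriv f x) x :=
  ((hf.contDiffAt (hs.mem_nhds hx)).differentiableAt hn).hasDerivAt

theorem deriv_comp_div_const {𝕜 E : Type*} [NontriviallyNormedField 𝕜] [NormedAddCommGroup E]
    [NormedSpace 𝕜 E] (c : 𝕜) (f : 𝕜 → E) (x : 𝕜) :
    deriv (fun u => f (u / c)) x = c⁻¹ • deriv f (x / c) := by
  simpa only [div_eq_inv_mul] using deriv_comp_mul_left c⁻¹ f x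

section Derivatives

variable {𝕜 𝕜' : Type*} [NontriviallyNormedField 𝕜] [NontriviallyNormedField 𝕜']
  [NormedAlgebra 𝕜 𝕜'] {q r : 𝕜 → 𝕜'} {t : 𝕜} {c w : 𝕜'}

theorem hasDerivAt_neg_deriv_div_two_mul [CharZero 𝕜'] (hq : HasDerivAt q (deriv q t) t)
    (hq' : HasDerivAt (deriv q) c t) (h0 : q t ≠ 0) :
    HasDerivAt (fun t => -deriv q t / (2 * q t)) ((deriv q t ^ 2 - q t * c) / (2 * q t ^ 2)) t :=
  (hq'.fun_neg.div (hq.const_mul 2) (mul_ne_zero two_ne_zero h0)).congr_deriv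
    (by field_simp; ring)

theorem hasDerivAt_neg_mul_deriv_sub_two_mul_sq_mul_sq (hq : HasDerivAt q (deriv q t) t)
    (hr : HasDerivAt r (deriv r t) t) (hr' : HasDerivAt (deriv r) w t) :
    HasDerivAt (fun t => -q t * deriv r t - 2 * q t ^ 2 * r t ^ 2)
      (-(deriv q t * deriv r t + q t * w)
        - 4 * q t * r t * (deriv q t * r t + q t * deriv r t)) t :=
  ((hq.fun_neg.fun_mul hr').fun_sub (((hq.fun_pow 2).const_mul 2).fun_mul
    (hr.fun_pow 2))).congr_deriv (by push_cast; ring)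

end Derivatives

section Identities

variable {K : Type*} [Field K] [CharZero K] {a b c u v w T α : K}

theorem similarity_y_identity (ha : a ≠ 0)
    (h1 : 2 * T * a + c / 2 - 2 * a ^ 2 * v - 4 * a ^ 3 * u ^ 2 = 0) :
    (b ^ 2 - a * c) / (2 * a ^ 2)
      = 2 * (-b / (2 * a)) ^ 2 + 2 * (-a * v - 2 * a ^ 2 * u ^ 2) + 2 * T := by
  linear_combination (norm := (field_simp; ring)) (-1 / a) * h1

theorem similarity_z_identity (ha : a ≠ 0)
    (h1 : 2 * T * a + c / 2 - 2 * a ^ 2 * v - 4 * a ^ 3 * u ^ 2 = 0)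
    (h2 : 2 * T * a * u + (c * u + a * w - b * v) / 2 - 4 * a ^ 3 * u ^ 3 = -α) :
    -(b * v + a * w) - 4 * a * u * (b * u + a * v)
      = -4 * (-b / (2 * a)) * (-a * v - 2 * a ^ 2 * u ^ 2) + 2 * α := by
  linear_combination (norm := (field_simp; ring)) (-2) * h2 + (2 * u) * h1

end Identities

theorem PII_from_similarity
    (I : Set ℝ) (hI : IsOpen I) (α : ℂ)
    (q r : ℝ → ℂ)
    (hq : ContDiffOn ℝ 2 q I) (hr : ContDiffOn ℝ 2 r I)
    (hq0 : ∀ t ∈ I, q t ≠ 0)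
    (hsim1 : ∀ t ∈ I,
      2 * (t : ℂ) * q t + deriv (deriv q) t / 2
        - 2 * (q t) ^ 2 * deriv r t - 4 * (q t) ^ 3 * (r t) ^ 2 = 0)
    (hsim2 : ∀ t ∈ I,
      2 * (t : ℂ) * q t * r t
        + (deriv (deriv q) t * r t + q t * deriv (deriv r) t
            - deriv q t * deriv r t) / 2
        - 4 * (q t) ^ 3 * (r t) ^ 3
      = -α)
    (y z : ℝ → ℂ)
    (hy : y = fun (t : ℝ) => -deriv q t / (2 * q t))
    (hz : z = fun (t : ℝ) => -q t * deriv r t - 2 * (q t) ^ 2 * (r t) ^ 2) :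
    DifferentiableOn ℝ y I ∧ DifferentiableOn ℝ z I ∧
    (∀ t ∈ I,
      deriv y t = 2 * (y t) ^ 2 + 2 * z t + 2 * (t : ℂ) ∧
      deriv z t = -4 * y t * z t + 2 * α) ∧
    (∀ s : ℝ, s / 2 ∈ I →
      deriv (fun (u : ℝ) => y (u / 2)) s
        = (y (s / 2)) ^ 2 + z (s / 2) + (s : ℂ) / 2 ∧
      deriv (fun (u : ℝ) => z (u / 2)) s
        = -2 * y (s / 2) * z (s / 2) + α) := by
  have hasDerivAt_yz : ∀ t ∈ I,
      HasDerivAt y (2 * (y t) ^ 2 + 2 * z t + 2 * (t : ℂ)) t ∧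
      HasDerivAt z (-4 * y t * z t + 2 * α) t := by
    intro t ht
    have hqt := hq.hasDerivAt_of_isOpen hI (by norm_num) ht
    have hrt := hr.hasDerivAt_of_isOpen hI (by norm_num) ht
    have hqt' := (hq.deriv_of_isOpen hI (by norm_num)).hasDerivAt_of_isOpen hI one_ne_zero ht
    have hrt' := (hr.deriv_of_isOpen hI (by norm_num)).hasDerivAt_of_isOpen hI one_ne_zero ht
    subst hy hz
    exact ⟨similarity_y_identity (hq0 t ht) (hsim1 t ht) ▸
        hasDerivAt_neg_deriv_div_two_mul hqt hqt' (hq0 t ht),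
      similarity_z_identity (hq0 t ht) (hsim1 t ht) (hsim2 t ht) ▸
        hasDerivAt_neg_mul_deriv_sub_two_mul_sq_mul_sq hqt hrt hrt'⟩
  have deriv_yz : ∀ t ∈ I,
      deriv y t = 2 * (y t) ^ 2 + 2 * z t + 2 * (t : ℂ) ∧
      deriv z t = -4 * y t * z t + 2 * α :=
    fun t ht => ⟨(hasDerivAt_yz t ht).1.deriv, (hasDerivAt_yz t ht).2.deriv⟩
  refine ⟨fun t ht => (hasDerivAt_yz t ht).1.differentiableAt.differentiableWithinAt,
    fun t ht => (hasDerivAt_yz t ht).2.differentiableAt.differentiableWithinAt, deriv_yz,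
    fun s hs => ?_⟩
  simp only [deriv_comp_div_const, (deriv_yz _ hs).1, (deriv_yz _ hs).2, Complex.real_smul]
  push_cast
  constructor <;> ring
end
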